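/- The threshold satisfies b* > c, and K_{j−1} > 0 for every j ∈ {1, …, m_p+1}. -/

import Mathlib

open Finset Matrix MeasureTheory

/-- The (i,j) cofactor of a square matrix: (−1)^(i+j) times the determinant of the
submatrix obtained by deleting row `i` and column `j`. -/
noncomputable def cof {n : ℕ} (M : Matrix (Fin (n + 1)) (Fin (n + 1)) ℝ)
    (i j : Fin (n + 1)) : ℝ :=
  (-1 : ℝ) ^ ((i : ℕ) + (j : ℕ)) * (M.submatrix i.succAbove j.succAbove).det

/-! The first row of `A` is `(1, …, 1)` and the others are of Cauchy type, so `A x = e₀` is solved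
by the Lagrange weights `x j = ∏ᵢ (r j - β i) / ∏_{l ≠ j} (r j - r l)`: the identities
`∑ⱼ x j = 1` and `∑ⱼ x j / (β i - r j) = 0` are the top coefficients of `∏ᵢ (X - β i)` and of
`∏_{k ≠ i} (X - β k)`, read off by Lagrange interpolation at the nodes `r j`. Hence
`Cof_{1,j}[A] / det A = x j`, which interlacing makes positive. The bound `c < b*` is
`1 / β (i + 1) < 1 / r i` summed, together with `0 < 1 / r m`. -/

theorem cof_eq_adjugate {n : ℕ} (M : Matrix (Fin (n + 1)) (Fin (n + 1)) ℝ) (i j : Fin (n + 1)) :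
    cof M i j = M.adjugate j i :=
  (adjugate_fin_succ_eq_det_submatrix M j i).symm

theorem Matrix.adjugate_apply_eq_det_mul_of_mulVec_eq_single {n α : Type*} [Fintype n]
    [DecidableEq n] [CommRing α] {A : Matrix n n α} {x : n → α} {i : n}
    (h : A *ᵥ x = Pi.single i 1) (j : n) : A.adjugate j i = A.det * x j := by
  have := congrFun (congrArg (A.adjugate *ᵥ ·) h) j
  simpa [mulVec_mulVec, adjugate_mul, mulVec_single, smul_mulVec, one_mulVec] using this.symm

section CauchyWeight

variable {F : Type*} [Field F] {v β : ℕ → F} {m : ℕ}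

noncomputable def cauchyWeight (v β : ℕ → F) (m j : ℕ) : F :=
  (∏ i ∈ Icc 1 m, (v j - β i)) / ∏ l ∈ (range (m + 1)).erase j, (v j - v l)

theorem sum_cauchyWeight (hv : Set.InjOn v (range (m + 1))) :
    ∑ j ∈ range (m + 1), cauchyWeight v β m j = 1 := by
  have hP := Lagrange.coeff_eq_sum hv (P := ∏ i ∈ Icc 1 m, (Polynomial.X - Polynomial.C (β i)))
    (by
      rw [Polynomial.degree_eq_natDegree (Polynomial.monic_prod_X_sub_C _ _).ne_zero]
      simp only [Polynomial.natDegree_finsetProd_X_sub_C_eq_card, Nat.card_Icc, card_range]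
      exact_mod_cast m.lt_succ_self)
  simp only [card_range, add_tsub_cancel_right, Polynomial.eval_prod, Polynomial.eval_sub,
    Polynomial.eval_X, Polynomial.eval_C] at hP
  rw [← (Polynomial.monic_prod_X_sub_C β (Icc 1 m)).coeff_natDegree]
  simpa [cauchyWeight] using hP.symm

theorem sum_cauchyWeight_div_sub (hv : Set.InjOn v (range (m + 1))) {i : ℕ} (hi : i ∈ Icc 1 m)
    (hβ : ∀ j ∈ range (m + 1), v j ≠ β i) :
    ∑ j ∈ range (m + 1), cauchyWeight v β m j / (β i - v j) = 0 := by
  set P := ∏ k ∈ (Icc 1 m).erase i, (Polynomial.X - Polynomial.C (β k))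
  have hdeg : P.natDegree < m := by
    simp only [P, Polynomial.natDegree_finsetProd_X_sub_C_eq_card, card_erase_of_mem hi,
      Nat.card_Icc]
    have := mem_Icc.1 hi
    omega
  have hP := Lagrange.coeff_eq_sum hv (P := P) (by
    rw [Polynomial.degree_eq_natDegree (Polynomial.monic_prod_X_sub_C _ _).ne_zero, card_range]
    exact_mod_cast hdeg.trans m.lt_succ_self)
  rw [card_range, add_tsub_cancel_right, Polynomial.coeff_eq_zero_of_natDegree_lt hdeg] at hP
  have hterm : ∀ j ∈ range (m + 1), cauchyWeight v β m j / (β i - v j)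
      = -(P.eval (v j) / ∏ l ∈ (range (m + 1)).erase j, (v j - v l)) := by
    intro j hj
    have hne : β i - v j ≠ 0 := sub_ne_zero.2 (hβ j hj).symm
    rw [cauchyWeight, ← mul_prod_erase _ _ hi]
    simp only [P, Polynomial.eval_prod, Polynomial.eval_sub, Polynomial.eval_X, Polynomial.eval_C]
    field_simp
    ring
  rw [sum_congr rfl hterm, sum_neg_distrib, ← hP, neg_zero]

theorem mulVec_cauchyWeight (hv : Set.InjOn v (range (m + 1)))
    (hβ : ∀ i ∈ Icc 1 m, ∀ j ∈ range (m + 1), v j ≠ β i)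
    (A : Matrix (Fin (m + 1)) (Fin (m + 1)) F)
    (hA : ∀ i j : Fin (m + 1), A i j = if (i : ℕ) = 0 then 1 else β i / (β i - v j)) :
    A *ᵥ (fun j => cauchyWeight v β m j) = Pi.single 0 1 := by
  funext i
  simp only [mulVec, dotProduct, hA]
  rcases Fin.eq_zero_or_eq_succ i with rfl | ⟨i, rfl⟩
  · simp only [Fin.val_zero, if_true, one_mul, Pi.single_eq_same]
    rw [Fin.sum_univ_eq_sum_range (fun j => cauchyWeight v β m j)]
    exact sum_cauchyWeight hv
  · have hi : (i : ℕ) + 1 ∈ Icc 1 m := mem_Icc.2 ⟨by omega, by omega⟩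
    simp only [Fin.val_succ, Nat.add_one_ne_zero, if_false, Pi.single_eq_of_ne (Fin.succ_ne_zero i)]
    rw [Fin.sum_univ_eq_sum_range (fun j => β (i + 1) / (β (i + 1) - v j) * cauchyWeight v β m j)]
    simp_rw [div_mul_eq_mul_div, mul_div_assoc, ← mul_sum]
    rw [sum_cauchyWeight_div_sub hv hi (hβ _ hi), mul_zero]

end CauchyWeight

/-- `r 0 < β 1 < r 1 < ⋯ < β m < r m`. -/
def Interlaces (r β : ℕ → ℝ) (m : ℕ) : Prop :=
  ∀ k, 1 ≤ k → k ≤ m → r (k - 1) < β k ∧ β k < r k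

namespace Interlaces

variable {r β : ℕ → ℝ} {m i j : ℕ}

theorem strictMonoOn (h : Interlaces r β m) : StrictMonoOn r (Set.Iic m) :=
  strictMonoOn_Iic_of_lt_succ fun k hk => by
    obtain ⟨hlt, hgt⟩ := h (k + 1) (by omega) (Order.succ_le_of_lt hk)
    rw [Order.succ_eq_add_one]
    simpa using hlt.trans hgt

theorem injOn (h : Interlaces r β m) : Set.InjOn r (range (m + 1)) :=
  h.strictMonoOn.injOn.mono fun k hk => by simpa [Nat.lt_succ_iff] using hk

theorem lt_of_le (h : Interlaces r β m) (hi : 1 ≤ i) (hij : i ≤ j) (hj : j ≤ m) : β i < r j :=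
  (h i hi (hij.trans hj)).2.trans_le (h.strictMonoOn.monotoneOn (hij.trans hj) hj hij)

theorem lt_of_lt (h : Interlaces r β m) (hi : i ≤ m) (hji : j < i) : r j < β i :=
  (h.strictMonoOn.monotoneOn (show j ≤ m by omega) (show i - 1 ≤ m by omega)
    (show j ≤ i - 1 by omega)).trans_lt (h i (by omega) hi).1

theorem ne (h : Interlaces r β m) (hi : i ∈ Icc 1 m) (hj : j ∈ range (m + 1)) : r j ≠ β i := by
  rw [mem_Icc] at hi
  rw [mem_range] at hj
  rcases lt_or_ge j i with hji | hij
  · exact (h.lt_of_lt hi.2 hji).ne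
  · exact (h.lt_of_le hi.1 hij (by omega)).ne'

theorem pos (h : Interlaces r β m) (h0 : 0 < r 0) (hj : j ≤ m) : 0 < r j :=
  h0.trans_le (h.strictMonoOn.monotoneOn (Nat.zero_le m) hj (Nat.zero_le j))

theorem pos_of_mem_Icc (h : Interlaces r β m) (h0 : 0 < r 0) (hi : i ∈ Icc 1 m) : 0 < β i := by
  rw [mem_Icc] at hi
  exact (h.pos h0 (by omega)).trans (h i hi.1 hi.2).1

theorem sum_one_div_lt (h : Interlaces r β m) (h0 : 0 < r 0) :
    ∑ i ∈ Icc 1 m, 1 / β i < ∑ i ∈ range (m + 1), 1 / r i := by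
  have hshift : ∑ i ∈ Icc 1 m, 1 / β i = ∑ i ∈ range m, 1 / β (1 + i) := by
    rw [← Ico_add_one_right_eq_Icc, sum_Ico_eq_sum_range, Nat.add_sub_cancel]
  have hle : ∑ i ∈ range m, 1 / β (1 + i) ≤ ∑ i ∈ range m, 1 / r i := by
    refine sum_le_sum fun i hi => ?_
    have := mem_range.1 hi
    exact one_div_le_one_div_of_le (h.pos h0 (by omega))
      (h.lt_of_lt (i := 1 + i) (by omega) (by omega)).le
  rw [hshift, sum_range_succ]
  linarith [one_div_pos.2 (h.pos h0 le_rfl)]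

theorem cauchyWeight_pos (h : Interlaces r β m) (hj : j ≤ m) : 0 < cauchyWeight r β m j := by
  -- pair `β i` with `r (i - 1)` for `i ≤ j` and with `r i` for `i > j`: each ratio is positive
  set τ : ℕ → ℕ := fun i => if i ≤ j then i - 1 else i
  have hden : ∏ l ∈ (range (m + 1)).erase j, (r j - r l) = ∏ i ∈ Icc 1 m, (r j - r (τ i)) := by
    refine (prod_nbij' τ (fun l => if l < j then l + 1 else l) ?_ ?_ ?_ ?_ fun _ _ => rfl).symm <;>
    · intro a ha
      simp only [τ, mem_Icc, mem_erase, mem_range] at ha ⊢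
      split_ifs <;> omega
  rw [cauchyWeight, hden, ← prod_div_distrib]
  refine prod_pos fun i hi => ?_
  rw [mem_Icc] at hi
  by_cases hij : i ≤ j
  · simp only [τ, if_pos hij]
    exact div_pos (sub_pos.2 (h.lt_of_le hi.1 hij hj))
      (sub_pos.2 (h.strictMonoOn (by simp; omega) (by simpa) (by omega)))
  · simp only [τ, if_neg hij]
    exact div_pos_of_neg_of_neg (sub_neg.2 (h.lt_of_lt hi.2 (by omega)))
      (sub_neg.2 (h.strictMonoOn (by simpa) (by simpa using hi.2) (by omega)))

end Interlaces

theorem stmt7_general (c : ℝ)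
    (mp : ℕ)
    (βp : ℕ → ℝ)
    (r : ℕ → ℝ)
    (hr0 : 0 < r 0)
    (hinter : ∀ k, 1 ≤ k → k ≤ mp → r (k - 1) < βp k ∧ βp k < r k)
    (A : Matrix (Fin (mp + 1)) (Fin (mp + 1)) ℝ)
    (hA : ∀ i j : Fin (mp + 1), A i j = if (i : ℕ) = 0 then 1 else βp i / (βp i - r j))
    (hdet : A.det ≠ 0)
    (R : ℝ)
    (hR : R = (∏ k ∈ Finset.range (mp + 1), r k) / ∏ k ∈ Finset.Icc 1 mp, βp k)
    (K : ℕ → ℝ)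
    (hK : ∀ j : Fin (mp + 1), K j = R * cof A 0 j / ((r j) ^ 2 * A.det))
    (b : ℝ)
    (hb : b = c + (∑ i ∈ Finset.range (mp + 1), 1 / r i) - ∑ i ∈ Finset.Icc 1 mp, 1 / βp i)
    :
    c < b ∧ ∀ j, j ≤ mp → 0 < K j := by
  have hI : Interlaces r βp mp := hinter
  refine ⟨by linarith [hI.sum_one_div_lt hr0], fun j hj => ?_⟩
  have hRpos : 0 < R := hR ▸ div_pos
    (prod_pos fun k hk => hI.pos hr0 (Nat.lt_succ_iff.1 (mem_range.1 hk)))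
    (prod_pos fun k hk => hI.pos_of_mem_Icc hr0 hk)
  obtain ⟨j, rfl⟩ : ∃ jf : Fin (mp + 1), (jf : ℕ) = j := ⟨⟨j, by omega⟩, rfl⟩
  have hcol := mulVec_cauchyWeight hI.injOn (fun _ hi _ hj => hI.ne hi hj) A hA
  have hKj : K j = R * cauchyWeight r βp mp j / r j ^ 2 := by
    rw [hK, cof_eq_adjugate, adjugate_apply_eq_det_mul_of_mulVec_eq_single hcol]
    field_simp
  rw [hKj]
  exact div_pos (mul_pos hRpos (hI.cauchyWeight_pos j.is_le)) (pow_pos (hI.pos hr0 j.is_le) 2)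

theorem stmt7 (σ μ ρ lamn lamp c : ℝ)
    (hσ : 0 < σ) (hρ : 0 < ρ) (hlamn : 0 < lamn) (hlamp : 0 < lamp) (hc : 0 < c)
    (mp mn : ℕ) (hmp : 1 ≤ mp) (hmn : 1 ≤ mn)
    (ωp βp ωn βn : ℕ → ℝ)
    (hωp : ∀ k, 1 ≤ k → k ≤ mp → 0 < ωp k)
    (hωpsum : ∑ k ∈ Finset.Icc 1 mp, ωp k = 1)
    (hβp1 : 0 < βp 1)
    (hβpmono : ∀ k, 1 ≤ k → k < mp → βp k < βp (k + 1))
    (hωn : ∀ k, 1 ≤ k → k ≤ mn → 0 < ωn k)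
    (hωnsum : ∑ k ∈ Finset.Icc 1 mn, ωn k = 1)
    (hβn1 : 0 < βn 1)
    (hβnmono : ∀ k, 1 ≤ k → k < mn → βn k < βn (k + 1))
    (r : ℕ → ℝ)
    (hroot : ∀ j, j ≤ mp →
      σ ^ 2 * (r j) ^ 2 / 2 + μ * r j - (ρ + lamn + lamp)
        + lamp * ∑ i ∈ Finset.Icc 1 mp, ωp i * βp i / (βp i - r j)
        + lamn * ∑ i ∈ Finset.Icc 1 mn, ωn i * βn i / (r j + βn i) = 0)
    (hr0 : 0 < r 0)
    (hinter : ∀ k, 1 ≤ k → k ≤ mp → r (k - 1) < βp k ∧ βp k < r k)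
    (A : Matrix (Fin (mp + 1)) (Fin (mp + 1)) ℝ)
    (hA : ∀ i j : Fin (mp + 1), A i j = if (i : ℕ) = 0 then 1 else βp i / (βp i - r j))
    (hdet : A.det ≠ 0)
    (R : ℝ)
    (hR : R = (∏ k ∈ Finset.range (mp + 1), r k) / ∏ k ∈ Finset.Icc 1 mp, βp k)
    (K : ℕ → ℝ)
    (hK : ∀ j : Fin (mp + 1), K j = R * cof A 0 j / ((r j) ^ 2 * A.det))
    (b : ℝ)
    (hb : b = c + (∑ i ∈ Finset.range (mp + 1), 1 / r i) - ∑ i ∈ Finset.Icc 1 mp, 1 / βp i)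
    :
    c < b ∧ ∀ j, j ≤ mp → 0 < K j :=
  stmt7_general c mp βp r hr0 hinter A hA hdet R hR K hK b hb
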